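/- Truth Lemma: let X ⊆ {D,T,4} and L = LIK X. In the canonical model (W_L, ≤_L, R_L, V_L), for every formula A and every prime theory Γ ∈ W_L: A ∈ Γ if and only if (W_L, ≤_L, R_L, V_L), Γ ⊩ A. -/

import Mathlib

/-- Formulas of intuitionistic modal logic. -/
inductive Formula : Type where
  | atom : ℕ → Formula
  | top  : Formula
  | bot  : Formula
  | and  : Formula → Formula → Formula
  | or   : Formula → Formula → Formula
  | imp  : Formula → Formula → Formula
  | box  : Formula → Formula
  | dia  : Formula → Formula
deriving DecidableEq

/-- A model: a frame `(W, ≤, R)` together with a monotone valuation. -/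
structure Model (W : Type) where
  le : W → W → Prop
  rel : W → W → Prop
  val : ℕ → W → Prop
  le_refl : ∀ x, le x x
  le_trans : ∀ x y z, le x y → le y z → le x z
  val_mono : ∀ p x y, le x y → val p x → val p y

/-- Forward confluence: `x ≤ x'` and `R x y` yield `y'` with `R x' y'` and `y ≤ y'`. -/
def ForwardConfluent {W : Type} (M : Model W) : Prop :=
  ∀ x x' y, M.le x x' → M.rel x y → ∃ y', M.rel x' y' ∧ M.le y y'

/-- Downward confluence: `x ≤ x'` and `R x' y'` yield `y` with `R x y` and `y ≤ y'`. -/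
def DownwardConfluent {W : Type} (M : Model W) : Prop :=
  ∀ x x' y', M.le x x' → M.rel x' y' → ∃ y, M.rel x y ∧ M.le y y'

/-- The local forcing relation. -/
def Force {W : Type} (M : Model W) : W → Formula → Prop
  | x, .atom p => M.val p x
  | _, .top => True
  | _, .bot => False
  | x, .and A B => Force M x A ∧ Force M x B
  | x, .or A B => Force M x A ∨ Force M x B
  | x, .imp A B => ∀ y, M.le x y → Force M y A → Force M y B
  | x, .box A => ∀ y, M.rel x y → Force M y A
  | x, .dia A => ∃ y, M.rel x y ∧ Force M y A

/-- The three optional extension axioms D, T, 4. -/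
inductive ModAx : Type where
  | D : ModAx
  | T : ModAx
  | Four : ModAx
deriving DecidableEq

/-- The Hilbert system LIK X: a complete Hilbert base for intuitionistic
propositional logic (as axiom schemata, hence all substitution instances of
IPL theorems are derivable), the modal axioms K□, K◇, N, DP, RV, the
extension axioms D, T, 4 according to membership in `X`, with rules
modus ponens and necessitation. -/
inductive LIK (X : Set ModAx) : Formula → Prop where
  | a1 (A B : Formula) : LIK X (A.imp (B.imp A))
  | a2 (A B C : Formula) : LIK X ((A.imp (B.imp C)).imp ((A.imp B).imp (A.imp C)))
  | a3 (A B : Formula) : LIK X ((A.and B).imp A)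
  | a4 (A B : Formula) : LIK X ((A.and B).imp B)
  | a5 (A B : Formula) : LIK X (A.imp (B.imp (A.and B)))
  | a6 (A B : Formula) : LIK X (A.imp (A.or B))
  | a7 (A B : Formula) : LIK X (B.imp (A.or B))
  | a8 (A B C : Formula) : LIK X ((A.imp C).imp ((B.imp C).imp ((A.or B).imp C)))
  | exfalso (A : Formula) : LIK X (Formula.bot.imp A)
  | truth : LIK X Formula.top
  | kbox (A B : Formula) :
      LIK X ((Formula.box (A.imp B)).imp ((Formula.box A).imp (Formula.box B)))
  | kdia (A B : Formula) :
      LIK X ((Formula.box (A.imp B)).imp ((Formula.dia A).imp (Formula.dia B)))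
  | nax : LIK X ((Formula.dia Formula.bot).imp Formula.bot)
  | dp (A B : Formula) :
      LIK X ((Formula.dia (A.or B)).imp ((Formula.dia A).or (Formula.dia B)))
  | rv (A B : Formula) :
      LIK X ((Formula.box (A.or B)).imp ((Formula.dia A).or (Formula.box B)))
  | dax : ModAx.D ∈ X → LIK X (Formula.dia Formula.top)
  | tax (A : Formula) : ModAx.T ∈ X →
      LIK X (((Formula.box A).imp A).and (A.imp (Formula.dia A)))
  | fourax (A : Formula) : ModAx.Four ∈ X →
      LIK X (((Formula.box A).imp (Formula.box (Formula.box A))).and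
        ((Formula.dia (Formula.dia A)).imp (Formula.dia A)))
  | mp (A B : Formula) : LIK X (A.imp B) → LIK X A → LIK X B
  | nec (A : Formula) : LIK X A → LIK X (Formula.box A)

/-- A theory for L = LIK X: contains all L-derivable formulas and is closed
under modus ponens. -/
def IsTheory (X : Set ModAx) (Γ : Set Formula) : Prop :=
  (∀ A, LIK X A → A ∈ Γ) ∧ ∀ A B, Formula.imp A B ∈ Γ → A ∈ Γ → B ∈ Γ

/-- A prime theory: a proper theory (⊥ ∉ Γ) deciding disjunctions. -/
def IsPrime (X : Set ModAx) (Γ : Set Formula) : Prop :=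
  IsTheory X Γ ∧ Formula.bot ∉ Γ ∧ ∀ A B, Formula.or A B ∈ Γ → A ∈ Γ ∨ B ∈ Γ

/-- The canonical accessibility relation:
`R_L Γ Δ` iff `□Γ ⊆ Δ` and `◇Δ ⊆ Γ`. -/
def CanR (Γ Δ : Set Formula) : Prop :=
  (∀ A, Formula.box A ∈ Γ → A ∈ Δ) ∧ (∀ A, A ∈ Δ → Formula.dia A ∈ Γ)

/-- The canonical model of L = LIK X: worlds are the prime theories, ordered
by inclusion, with the canonical accessibility relation and canonical
valuation. -/
def CanModel (X : Set ModAx) : Model {Γ : Set Formula // IsPrime X Γ} where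
  le Γ Δ := Γ.1 ⊆ Δ.1
  rel Γ Δ := CanR Γ.1 Δ.1
  val p Γ := Formula.atom p ∈ Γ.1
  le_refl := fun _ => subset_rfl
  le_trans := fun _ _ _ h1 h2 => h1.trans h2
  val_mono := fun _ _ _ h hp => h hp

/-!
The cases `⊃`, `□`, `◇` reduce to existence lemmas, each an instance of prime extension: a
theory disjoint from a set `I` that contains `⊥` and is closed under `∨` extends to a prime
theory disjoint from `I`. For `◇A ∈ Γ` one extends `{B | □B ∈ Γ} + A` avoiding
`{D | ◇D ∉ Γ}`, which is closed under `∨` by DP and contains `⊥` by N. For `□A ∉ Γ` one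
extends `{B | □B ∈ Γ}` avoiding the formulas that imply `E ∨ A` for some `E` with `◇E ∉ Γ`;
axiom RV is exactly what makes these two sets disjoint.
-/

/-- `S ⊢ A` in LIK X: necessitation applies to theorems only, never to hypotheses. -/
inductive Derives (X : Set ModAx) (S : Set Formula) : Formula → Prop
  | hyp {A : Formula} : A ∈ S → Derives X S A
  | thm {A : Formula} : LIK X A → Derives X S A
  | mp {A B : Formula} : Derives X S (A.imp B) → Derives X S A → Derives X S B

variable {X : Set ModAx} {S Γ T I : Set Formula} {A B C D E : Formula}

theorem LIK.imp_self (A : Formula) : LIK X (A.imp A) :=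
  .mp _ _ (.mp _ _ (.a2 A (A.imp A) A) (.a1 A (A.imp A))) (.a1 A A)

namespace Derives

theorem deduction (h : Derives X (insert A S) B) : Derives X S (A.imp B) := by
  induction h with
  | hyp h =>
    rcases h with rfl | h
    · exact thm (LIK.imp_self _)
    · exact mp (thm (.a1 _ _)) (hyp h)
  | thm h => exact mp (thm (.a1 _ _)) (thm h)
  | mp _ _ ih₁ ih₂ => exact mp (mp (thm (.a2 _ _ _)) ih₁) ih₂

theorem insert_self : Derives X (insert A S) A := hyp (Set.mem_insert _ _)

theorem or_elim (h : Derives X S (A.or B)) (hA : Derives X S (A.imp C))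
    (hB : Derives X S (B.imp C)) : Derives X S C :=
  mp (mp (mp (thm (.a8 A B C)) hA) hB) h

theorem lik_of_empty (h : Derives X ∅ A) : LIK X A := by
  induction h with
  | hyp h => exact absurd h (Set.notMem_empty _)
  | thm h => exact h
  | mp _ _ ih₁ ih₂ => exact .mp _ _ ih₁ ih₂

end Derives

theorem LIK.or_imp_or_or (h₁ : LIK X (A.imp (C.or E))) (h₂ : LIK X (B.imp (D.or E))) :
    LIK X ((A.or B).imp ((C.or D).or E)) := by
  have intro_or {S : Set Formula} {F : Formula} (hF : LIK X (F.imp (C.or D))) :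
      Derives X S (F.imp ((C.or D).or E)) := by
    refine .deduction (.mp (.thm (.a6 _ _)) (.mp (.thm hF) (.insert_self)))
  refine Derives.lik_of_empty (.deduction (.or_elim (.insert_self) ?_ ?_))
  · refine .deduction (.or_elim (.mp (.thm h₁) (.insert_self)) ?_ (.thm (.a7 _ _)))
    exact intro_or (.a6 C D)
  · refine .deduction (.or_elim (.mp (.thm h₂) (.insert_self)) ?_ (.thm (.a7 _ _)))
    exact intro_or (.a7 C D)

namespace IsTheory

theorem mem_of_lik (hΓ : IsTheory X Γ) (h : LIK X A) : A ∈ Γ := hΓ.1 A h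

theorem mp (hΓ : IsTheory X Γ) (hAB : A.imp B ∈ Γ) (hA : A ∈ Γ) : B ∈ Γ := hΓ.2 A B hAB hA

theorem mp_lik (hΓ : IsTheory X Γ) (hAB : LIK X (A.imp B)) (hA : A ∈ Γ) : B ∈ Γ :=
  hΓ.mp (hΓ.mem_of_lik hAB) hA

theorem mem_of_derives (hΓ : IsTheory X Γ) (h : Derives X Γ A) : A ∈ Γ := by
  induction h with
  | hyp h => exact h
  | thm h => exact hΓ.mem_of_lik h
  | mp _ _ ih₁ ih₂ => exact hΓ.mp ih₁ ih₂

theorem imp_mem_of_derives_insert (hΓ : IsTheory X Γ) (h : Derives X (insert A Γ) B) :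
    A.imp B ∈ Γ :=
  hΓ.mem_of_derives h.deduction

theorem and_mem_iff (hΓ : IsTheory X Γ) : A.and B ∈ Γ ↔ A ∈ Γ ∧ B ∈ Γ :=
  ⟨fun h => ⟨hΓ.mp_lik (.a3 A B) h, hΓ.mp_lik (.a4 A B) h⟩,
    fun ⟨hA, hB⟩ => hΓ.mp (hΓ.mp_lik (.a5 A B) hA) hB⟩

theorem or_mem_of_imp_mem (hΓ : IsTheory X Γ) (hAB : A.or B ∈ Γ) (hAC : A.imp C ∈ Γ)
    (hBD : B.imp D ∈ Γ) : C.or D ∈ Γ :=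
  hΓ.mem_of_derives <| .or_elim (.hyp hAB)
    (.deduction (.mp (.thm (.a6 C D)) (.mp (.hyp (Set.mem_insert_of_mem _ hAC)) .insert_self)))
    (.deduction (.mp (.thm (.a7 C D)) (.mp (.hyp (Set.mem_insert_of_mem _ hBD)) .insert_self)))

theorem preimage_box (hΓ : IsTheory X Γ) : IsTheory X (Formula.box ⁻¹' Γ) :=
  ⟨fun _ h => hΓ.mem_of_lik (.nec _ h),
    fun _ _ hAB hA => hΓ.mp (hΓ.mp_lik (.kbox _ _) hAB) hA⟩

theorem sUnion_of_isChain {c : Set (Set Formula)} (hc : IsChain (· ⊆ ·) c) (hne : c.Nonempty)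
    (h : ∀ Δ ∈ c, IsTheory X Δ) : IsTheory X (⋃₀ c) := by
  obtain ⟨Δ, hΔ⟩ := hne
  refine ⟨fun A hA => ⟨Δ, hΔ, (h Δ hΔ).mem_of_lik hA⟩, ?_⟩
  rintro A B ⟨Δ₁, hΔ₁, hAB⟩ ⟨Δ₂, hΔ₂, hA⟩
  rcases hc.total hΔ₁ hΔ₂ with h₁₂ | h₂₁
  · exact ⟨Δ₂, hΔ₂, (h Δ₂ hΔ₂).mp (h₁₂ hAB) hA⟩
  · exact ⟨Δ₁, hΔ₁, (h Δ₁ hΔ₁).mp hAB (h₂₁ hA)⟩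

end IsTheory

theorem isTheory_setOf_derives : IsTheory X {A | Derives X S A} :=
  ⟨fun _ h => .thm h, fun _ _ => .mp⟩

theorem IsPrime.or_mem_iff (hΓ : IsPrime X Γ) : A.or B ∈ Γ ↔ A ∈ Γ ∨ B ∈ Γ :=
  ⟨hΓ.2.2 A B, fun h => h.elim (hΓ.1.mp_lik (.a6 A B)) (hΓ.1.mp_lik (.a7 A B))⟩

theorem IsPrime.dia_or_mem (hΓ : IsPrime X Γ) (h : (A.or B).dia ∈ Γ) :
    A.dia ∈ Γ ∨ B.dia ∈ Γ :=
  hΓ.or_mem_iff.1 (hΓ.1.mp_lik (.dp A B) h)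

theorem IsPrime.dia_bot_not_mem (hΓ : IsPrime X Γ) : Formula.bot.dia ∉ Γ :=
  fun h => hΓ.2.1 (hΓ.1.mp_lik .nax h)

theorem exists_imp_mem_of_maximal {M : Set Formula}
    (hM : Maximal (fun Δ => IsTheory X Δ ∧ T ⊆ Δ ∧ Disjoint Δ I) M) (hA : A ∉ M) :
    ∃ D ∈ I, A.imp D ∈ M := by
  by_contra! hcon
  have hsub : M ⊆ {C | Derives X (insert A M) C} := fun _ hC => .hyp (Set.mem_insert_of_mem _ hC)
  have hdisj : Disjoint {C | Derives X (insert A M) C} I :=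
    Set.disjoint_left.2 fun D hD hDI => hcon D hDI (hM.1.1.imp_mem_of_derives_insert hD)
  exact hA (hM.2 ⟨isTheory_setOf_derives, hM.1.2.1.trans hsub, hdisj⟩ hsub .insert_self)

theorem IsTheory.exists_prime_of_disjoint (hT : IsTheory X T)
    (hI : ∀ D ∈ I, ∀ E ∈ I, D.or E ∈ I) (hbot : Formula.bot ∈ I) (hTI : Disjoint T I) :
    ∃ Δ, IsPrime X Δ ∧ T ⊆ Δ ∧ Disjoint Δ I := by
  obtain ⟨M, hTM, hM⟩ := zorn_subset_nonempty {Δ | IsTheory X Δ ∧ T ⊆ Δ ∧ Disjoint Δ I}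
    (fun c hcS hc ⟨Δ, hΔ⟩ => ⟨⋃₀ c,
      ⟨.sUnion_of_isChain hc ⟨Δ, hΔ⟩ fun Δ' hΔ' => (hcS hΔ').1,
        (hcS hΔ).2.1.trans (Set.subset_sUnion_of_mem hΔ),
        Set.disjoint_sUnion_left.2 fun Δ' hΔ' => (hcS hΔ').2.2⟩,
      fun _ => Set.subset_sUnion_of_mem⟩)
    T ⟨hT, subset_rfl, hTI⟩
  obtain ⟨hMthy, -, hMI⟩ := hM.1
  refine ⟨M, ⟨hMthy, Set.disjoint_right.1 hMI hbot, fun A B hAB => ?_⟩, hTM, hMI⟩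
  by_contra! hAB'
  obtain ⟨D, hDI, hD⟩ := exists_imp_mem_of_maximal hM hAB'.1
  obtain ⟨E, hEI, hE⟩ := exists_imp_mem_of_maximal hM hAB'.2
  have hDE : D.or E ∈ M := hMthy.mem_of_derives <| .or_elim (.hyp hAB)
    (.deduction (.mp (.thm (.a6 D E)) (.mp (.hyp (Set.mem_insert_of_mem _ hD)) (.insert_self))))
    (.deduction (.mp (.thm (.a7 D E)) (.mp (.hyp (Set.mem_insert_of_mem _ hE)) (.insert_self))))
  exact Set.disjoint_left.1 hMI hDE (hI D hDI E hEI)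

theorem IsTheory.exists_prime_of_imp_not_mem (hΓ : IsTheory X Γ) (h : A.imp B ∉ Γ) :
    ∃ Δ, IsPrime X Δ ∧ Γ ⊆ Δ ∧ A ∈ Δ ∧ B ∉ Δ := by
  obtain ⟨Δ, hΔ, hsub, hΔI⟩ := IsTheory.exists_prime_of_disjoint
    (isTheory_setOf_derives (S := insert A Γ)) (I := {D | LIK X (D.imp B)})
    (fun D hD E hE => .mp _ _ (.mp _ _ (.a8 D E B) hD) hE) (.exfalso B)
    (Set.disjoint_left.2 fun D hD hDB => h (hΓ.imp_mem_of_derives_insert (.mp (.thm hDB) hD)))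
  exact ⟨Δ, hΔ, fun C hC => hsub (.hyp (Set.mem_insert_of_mem _ hC)),
    hsub (.insert_self), Set.disjoint_right.1 hΔI (LIK.imp_self B)⟩

theorem IsPrime.exists_canR_of_dia_mem (hΓ : IsPrime X Γ) (h : A.dia ∈ Γ) :
    ∃ Δ, IsPrime X Δ ∧ CanR Γ Δ ∧ A ∈ Δ := by
  obtain ⟨Δ, hΔ, hsub, hΔI⟩ := IsTheory.exists_prime_of_disjoint
    (isTheory_setOf_derives (S := insert A (Formula.box ⁻¹' Γ))) (I := {D | D.dia ∉ Γ})
    (fun D hD E hE hDE => (hΓ.dia_or_mem hDE).elim hD hE) hΓ.dia_bot_not_mem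
    (Set.disjoint_left.2 fun D hD hDΓ => hDΓ <| hΓ.1.mp (hΓ.1.mp_lik (.kdia A D)
      (hΓ.1.preimage_box.imp_mem_of_derives_insert hD)) h)
  exact ⟨Δ, hΔ, ⟨fun C hC => hsub (.hyp (Set.mem_insert_of_mem _ hC)),
    fun C hC => not_not.1 (Set.disjoint_left.1 hΔI hC)⟩, hsub (.insert_self)⟩

theorem IsPrime.exists_canR_of_box_not_mem (hΓ : IsPrime X Γ) (h : A.box ∉ Γ) :
    ∃ Δ, IsPrime X Δ ∧ CanR Γ Δ ∧ A ∉ Δ := by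
  obtain ⟨Δ, hΔ, hsub, hΔI⟩ := hΓ.1.preimage_box.exists_prime_of_disjoint
    (I := {D | ∃ E, E.dia ∉ Γ ∧ LIK X (D.imp (E.or A))})
    (fun D ⟨E, hE, hDE⟩ D' ⟨E', hE', hDE'⟩ =>
      ⟨E.or E', fun h' => (hΓ.dia_or_mem h').elim hE hE', hDE.or_imp_or_or hDE'⟩)
    ⟨.bot, hΓ.dia_bot_not_mem, .exfalso _⟩
    (Set.disjoint_left.2 fun D hD ⟨E, hE, hDE⟩ =>
      (hΓ.or_mem_iff.1 (hΓ.1.mp_lik (.rv E A) (hΓ.1.preimage_box.mp_lik hDE hD))).elim hE h)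
  refine ⟨Δ, hΔ, ⟨fun C hC => hsub hC, fun C hC => ?_⟩,
    fun hA => Set.disjoint_left.1 hΔI hA ⟨.bot, hΓ.dia_bot_not_mem, .a7 _ _⟩⟩
  by_contra hC'
  exact Set.disjoint_left.1 hΔI hC ⟨C, hC', .a6 _ _⟩

theorem IsTheory.imp_mem_iff (hΓ : IsTheory X Γ) :
    A.imp B ∈ Γ ↔ ∀ Δ, IsPrime X Δ → Γ ⊆ Δ → A ∈ Δ → B ∈ Δ := by
  refine ⟨fun h Δ hΔ hsub hA => hΔ.1.mp (hsub h) hA, fun h => ?_⟩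
  by_contra hAB
  obtain ⟨Δ, hΔ, hsub, hA, hB⟩ := hΓ.exists_prime_of_imp_not_mem hAB
  exact hB (h Δ hΔ hsub hA)

theorem IsPrime.box_mem_iff (hΓ : IsPrime X Γ) :
    A.box ∈ Γ ↔ ∀ Δ, IsPrime X Δ → CanR Γ Δ → A ∈ Δ := by
  refine ⟨fun h Δ _ hR => hR.1 A h, fun h => ?_⟩
  by_contra hA
  obtain ⟨Δ, hΔ, hR, hA⟩ := hΓ.exists_canR_of_box_not_mem hA
  exact hA (h Δ hΔ hR)

theorem IsPrime.dia_mem_iff (hΓ : IsPrime X Γ) :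
    A.dia ∈ Γ ↔ ∃ Δ, IsPrime X Δ ∧ CanR Γ Δ ∧ A ∈ Δ :=
  ⟨hΓ.exists_canR_of_dia_mem, fun ⟨_, _, hR, hA⟩ => hR.2 A hA⟩

/-- Truth Lemma: membership in a prime theory coincides with forcing at that
theory in the canonical model. -/
theorem truth_lemma (X : Set ModAx) (A : Formula)
    (Γ : {Γ : Set Formula // IsPrime X Γ}) :
    A ∈ Γ.1 ↔ Force (CanModel X) Γ A := by
  induction A generalizing Γ with
  | atom p => rfl
  | top => simpa [Force] using Γ.2.1.mem_of_lik .truth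
  | bot => simpa [Force] using Γ.2.2.1
  | and A B ihA ihB => simp only [Force, ← ihA, ← ihB]; exact Γ.2.1.and_mem_iff
  | or A B ihA ihB => simp only [Force, ← ihA, ← ihB]; exact Γ.2.or_mem_iff
  | imp A B ihA ihB =>
    simp only [Force, ← ihA, ← ihB, Subtype.forall]; exact Γ.2.1.imp_mem_iff
  | box A ih => simp only [Force, ← ih, Subtype.forall]; exact Γ.2.box_mem_iff
  | dia A ih =>
    simp only [Force, ← ih, Subtype.exists]
    exact Γ.2.dia_mem_iff.trans
      ⟨fun ⟨Δ, hΔ, hR, hA⟩ => ⟨Δ, hΔ, hR, hA⟩, fun ⟨Δ, hΔ, hR, hA⟩ => ⟨Δ, hΔ, hR, hA⟩⟩
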